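/- arXiv:adap-org/9304001 — 2 statements merged into one kernel-verified Lean document; each statement's English description precedes it below -/
import Mathlib

section
/- For every natural number n ≥ 2 and every function F : {0,1}^n → {0,1}^n, the probability that the random boolean cellular automaton ⟨D̃,b̃⟩ on n gates computes the map F equals the probability that the random boolean cellular automaton ⟨D̃′,b̃′⟩ on n gates computes the map F. -/
open Filter Real

/-- A boolean cellular automaton on `n` gates: a directed graph on gates `1,…,n`
given by in-neighborhoods `inputs`, together with a boolean function per gate,
which depends only on the values of the gate's inputs. -/
structure BCA (n : ℕ) where
  inputs : Fin n → Finset (Fin n)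
  fn : Fin n → (Fin n → Bool) → Bool
  fn_depends : ∀ i x y, (∀ j ∈ inputs i, x j = y j) → fn i x = fn i y

namespace BCA

/-- One synchronous update step of the automaton. -/
def step {n : ℕ} (A : BCA n) (x : Fin n → Bool) : Fin n → Bool :=
  fun i => A.fn i x

/-- `Forced A i v t`: gate `i` is forced to value `v` in `t` steps. -/
inductive Forced {n : ℕ} (A : BCA n) : Fin n → Bool → ℕ → Prop
  | const (i : Fin n) (v : Bool) :
      (∀ x, A.fn i x = v) → Forced A i v 0
  | allInputs (i : Fin n) (u : Fin n → Bool) (t : ℕ) :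
      (∀ j ∈ A.inputs i, Forced A j (u j) t) → Forced A i (A.fn i u) (t + 1)
  | canalyzing (i m : Fin n) (u v : Bool) (t : ℕ) :
      m ∈ A.inputs i → (∀ x, x m = u → A.fn i x = v) →
      Forced A m u t → Forced A i v (t + 1)

/-- Gate `i` is forced (to some value) within `d` steps. -/
def ForcedWithin {n : ℕ} (A : BCA n) (i : Fin n) (d : ℕ) : Prop :=
  ∃ v, ∃ t ≤ d, Forced A i v t

/-- Gate `i` is forced (to some value) in `r` steps, `r` a real bound. -/
def ForcedWithinR {n : ℕ} (A : BCA n) (i : Fin n) (r : ℝ) : Prop :=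
  ∃ v, ∃ t : ℕ, (t : ℝ) ≤ r ∧ Forced A i v t

/-- `Ninv A d i` is `N_d^-(i)`. -/
def Ninv {n : ℕ} (A : BCA n) : ℕ → Fin n → Finset (Fin n)
  | 0, i => {i}
  | d + 1, i => (A.inputs i).biUnion (fun j => Ninv A d j)

/-- `Sd A d i` is `S_d^-(i) = ∪_{c ≤ d} N_c^-(i)`. -/
def Sd {n : ℕ} (A : BCA n) (d : ℕ) (i : Fin n) : Finset (Fin n) :=
  (Finset.range (d + 1)).biUnion (fun c => Ninv A c i)

/-- The subgraph induced on the gate set `s` is acyclic (no directed cycle). -/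
def AcyclicOn {n : ℕ} (A : BCA n) (s : Finset (Fin n)) : Prop :=
  ¬ ∃ (k : ℕ) (g : ℕ → Fin n), 0 < k ∧ (∀ r ≤ k, g r ∈ s) ∧
      (∀ r < k, g r ∈ A.inputs (g (r + 1))) ∧ g 0 = g k

end BCA
/-- A sample point for one gate in Kauffman-type model ⟨D̃,b̃⟩: an unordered pair of
distinct inputs (recorded in increasing order) and a 2-input boolean function,
whose first argument corresponds to the smaller input. -/
abbrev GateCfg (n : ℕ) := {p : Fin n × Fin n // p.1 < p.2} × (Bool → Bool → Bool)

/-- A sample point for the random automaton `⟨D̃,b̃⟩`: one gate configuration per gate. -/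
abbrev Config (n : ℕ) := Fin n → GateCfg n

/-- `f` depends on its first argument. -/
def DependsOnFirst (f : Bool → Bool → Bool) : Prop := ∃ b, f true b ≠ f false b

/-- `f` depends on its second argument. -/
def DependsOnSecond (f : Bool → Bool → Bool) : Prop := ∃ a, f a true ≠ f a false

open Classical in
/-- Probability of picking the boolean function `f` for a given gate, with bias `e`:
`(1-e)/16` for the 10 functions depending on both arguments, `(1+e)/16` for the 4
functions depending on exactly one argument, `(1+3e)/16` for the 2 constants. -/
noncomputable def fnWeight (e : ℝ) (f : Bool → Bool → Bool) : ℝ :=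
  if DependsOnFirst f ∧ DependsOnSecond f then (1 - e) / 16
  else if DependsOnFirst f ∨ DependsOnSecond f then (1 + e) / 16
  else (1 + 3 * e) / 16

/-- Probability of a complete configuration: independently for each gate, a uniform
unordered pair of distinct inputs and a boolean function with weight `fnWeight`. -/
noncomputable def configWeight (e : ℝ) {n : ℕ} (c : Config n) : ℝ :=
  ∏ i : Fin n, (1 / (n.choose 2 : ℝ)) * fnWeight e (c i).2

open Classical in
/-- Probability that the random boolean cellular automaton `⟨D̃,b̃⟩` on `n` gates
(with bias `e`) satisfies `P`. -/
noncomputable def Pr (e : ℝ) {n : ℕ} (P : Config n → Prop) : ℝ :=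
  ∑ c : Config n, if P c then configWeight e c else 0

/-- The boolean cellular automaton determined by a configuration. -/
def Config.toBCA {n : ℕ} (c : Config n) : BCA n where
  inputs i := {(c i).1.1.1, (c i).1.1.2}
  fn i x := (c i).2 (x (c i).1.1.1) (x (c i).1.1.2)
  fn_depends := by
    intro i x y h
    try simp only at h ⊢
    rw [h _ (Finset.mem_insert_self _ _),
      h _ (Finset.mem_insert_of_mem (Finset.mem_singleton_self _))]
/-- A sample point for one gate in the second model `⟨D̃′,b̃′⟩`: either two distinct
inputs with a 2-input boolean function, or a single input with a 1-input function. -/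
abbrev GateCfg' (n : ℕ) := GateCfg n ⊕ (Fin n × (Bool → Bool))

/-- A sample point for the random automaton `⟨D̃′,b̃′⟩`. -/
abbrev Config' (n : ℕ) := Fin n → GateCfg' n

/-- Inputs of a gate in the second model. -/
def GateCfg'.inputs {n : ℕ} : GateCfg' n → Finset (Fin n)
  | .inl g => {g.1.1.1, g.1.1.2}
  | .inr g => {g.1}

/-- Evaluation of a gate's boolean function in the second model. -/
def GateCfg'.eval {n : ℕ} : GateCfg' n → (Fin n → Bool) → Bool
  | .inl g, x => g.2 (x g.1.1.1) (x g.1.1.2)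
  | .inr g, x => g.2 (x g.1)

/-- Per-gate probability in the second model: with probability `1-e` the gate gets two
distinct inputs uniform among `C(n,2)` pairs and one of the 16 functions uniformly; with
probability `e` it gets a single input uniform among `n` and one of 4 functions uniformly. -/
noncomputable def gateWeight' (e : ℝ) (n : ℕ) : GateCfg' n → ℝ
  | .inl _ => (1 - e) / ((n.choose 2 : ℝ) * 16)
  | .inr _ => e / ((n : ℝ) * 4)

/-- Probability of a configuration in the second model (gates independent). -/
noncomputable def config'Weight (e : ℝ) {n : ℕ} (c : Config' n) : ℝ :=
  ∏ i : Fin n, gateWeight' e n (c i)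

open Classical in
/-- Probability that the random boolean cellular automaton `⟨D̃′,b̃′⟩` on `n` gates
(with bias `e`) satisfies `P`. -/
noncomputable def Pr' (e : ℝ) {n : ℕ} (P : Config' n → Prop) : ℝ :=
  ∑ c : Config' n, if P c then config'Weight e c else 0

/-- The boolean cellular automaton determined by a configuration of the second model. -/
def Config'.toBCA {n : ℕ} (c : Config' n) : BCA n where
  inputs i := (c i).inputs
  fn i x := (c i).eval x
  fn_depends := by
    intro i x y h
    try simp only at h ⊢
    cases hc : c i with
    | inl g =>
        rw [hc] at h
        simp only [GateCfg'.inputs] at h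
        simp only [GateCfg'.eval]
        rw [h _ (Finset.mem_insert_self _ _),
          h _ (Finset.mem_insert_of_mem (Finset.mem_singleton_self _))]
    | inr g =>
        rw [hc] at h
        simp only [GateCfg'.inputs] at h
        simp only [GateCfg'.eval]
        rw [h _ (Finset.mem_singleton_self _)]

/-!
Both models choose the gates independently, so the probability of computing `F` factors into
one factor per gate `i`, the probability that the gate computes `g = fun x => F x i`, and it is
enough to compare these. Written as a mixture (`fnWeight_eq`), the first model gives a gate a
uniform binary gate with probability `1 - e`, exactly as the second model does; otherwise it
gives a uniform unary function `h` of one input of a uniform pair. Each input `j` lies in `n - 1`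
of the `C(n, 2)` pairs, so this puts mass `e (n - 1) / (8 C(n, 2)) = e / (4 n)` on each unary gate
`(j, h)`, which is its weight in the second model.
-/

open Finset

theorem BCA.step_eq_iff {n : ℕ} (A : BCA n) (F : (Fin n → Bool) → Fin n → Bool) :
    A.step = F ↔ ∀ i, A.fn i = fun x => F x i := by
  simp only [funext_iff, BCA.step]
  exact forall_comm

theorem Fintype.sum_subtype_lt_add {α M : Type*} [Fintype α] [LinearOrder α] [AddCommMonoid M]
    (φ : α → M) :
    ∑ p : {p : α × α // p.1 < p.2}, (φ p.1.1 + φ p.1.2) = (Fintype.card α - 1) • ∑ a, φ a := by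
  classical
  calc ∑ p : {p : α × α // p.1 < p.2}, (φ p.1.1 + φ p.1.2)
      = ∑ p : α × α, if p.1 < p.2 then φ p.1 + φ p.2 else 0 := by
        rw [← Finset.sum_filter]
        exact (Finset.sum_subtype {p : α × α | p.1 < p.2} (fun _ => Finset.mem_filter_univ _)
          (fun p => φ p.1 + φ p.2)).symm
    _ = ∑ p : α × α, ((if p.1 < p.2 then φ p.1 else 0) + if p.2 < p.1 then φ p.1 else 0) := by
        simp only [ite_add_zero, Finset.sum_add_distrib]
        exact congrArg _ (Fintype.sum_equiv (Equiv.prodComm α α) _ _ fun _ => rfl)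
    _ = ∑ a : α, ∑ b : α, if a ≠ b then φ a else 0 := by
        rw [Fintype.sum_prod_type]
        refine Finset.sum_congr rfl fun a _ => Finset.sum_congr rfl fun b _ => ?_
        rcases lt_trichotomy a b with h | rfl | h
        · simp [h, h.ne, not_lt_of_gt h]
        · simp
        · simp [h, h.ne', not_lt_of_gt h]
    _ = (Fintype.card α - 1) • ∑ a, φ a := by
        rw [Finset.smul_sum]
        refine Finset.sum_congr rfl fun a _ => ?_
        rw [← Finset.sum_filter, Finset.sum_const, Finset.filter_ne, Finset.card_erase_of_mem
          (Finset.mem_univ a), Finset.card_univ]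

def GateCfg.eval {n : ℕ} (a : GateCfg n) (x : Fin n → Bool) : Bool :=
  a.2 (x a.1.1.1) (x a.1.1.2)

theorem Pr_step_eq_prod (e : ℝ) {n : ℕ} (F : (Fin n → Bool) → Fin n → Bool) :
    Pr e (fun c : Config n => c.toBCA.step = F) =
      ∏ i, ∑ a : GateCfg n,
        if a.eval = (fun x => F x i) then 1 / (n.choose 2 : ℝ) * fnWeight e a.2 else 0 := by
  rw [Pr, Fintype.prod_sum]
  refine Finset.sum_congr rfl fun c _ => ?_
  rw [Fintype.prod_ite_zero, configWeight, BCA.step_eq_iff]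
  congr

theorem Pr'_step_eq_prod (e : ℝ) {n : ℕ} (F : (Fin n → Bool) → Fin n → Bool) :
    Pr' e (fun c : Config' n => c.toBCA.step = F) =
      ∏ i, ∑ a : GateCfg' n, if a.eval = (fun x => F x i) then gateWeight' e n a else 0 := by
  rw [Pr', Fintype.prod_sum]
  refine Finset.sum_congr rfl fun c _ => ?_
  rw [Fintype.prod_ite_zero, config'Weight, BCA.step_eq_iff]
  congr

def unaryCount (f : Bool → Bool → Bool) : ℕ :=
  #{h : Bool → Bool | (fun a _ => h a) = f} + #{h : Bool → Bool | (fun _ b => h b) = f}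

theorem unaryCount_eq (f : Bool → Bool → Bool) :
    unaryCount f =
      if (∃ b, f true b ≠ f false b) ∧ (∃ a, f a true ≠ f a false) then 0
      else if (∃ b, f true b ≠ f false b) ∨ (∃ a, f a true ≠ f a false) then 1 else 2 := by
  revert f
  decide

theorem fnWeight_eq (e : ℝ) (f : Bool → Bool → Bool) :
    fnWeight e f = (1 - e) / 16 + e / 8 * unaryCount f := by
  rw [unaryCount_eq]
  unfold fnWeight DependsOnFirst DependsOnSecond
  split_ifs <;> push_cast <;> ring

theorem sum_unaryCount_filter {ι : Type*} [Fintype ι] [DecidableEq ι] (i j : ι)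
    (g : (ι → Bool) → Bool) :
    ∑ f : Bool → Bool → Bool with (fun x => f (x i) (x j)) = g, unaryCount f =
      #{h : Bool → Bool | (fun x => h (x i)) = g} + #{h : Bool → Bool | (fun x => h (x j)) = g} := by
  simp only [unaryCount, sum_add_distrib, sum_card_fiberwise_eq_card_filter, mem_filter_univ]

theorem sum_ite_eval_unaryCount {n : ℕ} (g : (Fin n → Bool) → Bool) :
    ∑ a : GateCfg n, (if a.eval = g then (unaryCount a.2 : ℝ) else 0) =
      (n - 1 : ℕ) * ∑ j : Fin n, (#{h : Bool → Bool | (fun x => h (x j)) = g} : ℝ) := by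
  calc ∑ a : GateCfg n, (if a.eval = g then (unaryCount a.2 : ℝ) else 0)
      = ∑ p : {p : Fin n × Fin n // p.1 < p.2},
          ((#{h : Bool → Bool | (fun x => h (x p.1.1)) = g} : ℝ) +
            #{h : Bool → Bool | (fun x => h (x p.1.2)) = g}) := by
        rw [Fintype.sum_prod_type]
        refine sum_congr rfl fun p _ => ?_
        rw [← sum_filter, ← Nat.cast_sum]
        exact_mod_cast sum_unaryCount_filter p.1.1 p.1.2 g
    _ = (n - 1 : ℕ) * ∑ j : Fin n, (#{h : Bool → Bool | (fun x => h (x j)) = g} : ℝ) := by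
        rw [Fintype.sum_subtype_lt_add (fun j => (#{h : Bool → Bool | (fun x => h (x j)) = g} : ℝ)),
          Fintype.card_fin, nsmul_eq_mul]

theorem sum_ite_eval_fnWeight (e : ℝ) {n : ℕ} (g : (Fin n → Bool) → Bool) :
    ∑ a : GateCfg n, (if a.eval = g then 1 / (n.choose 2 : ℝ) * fnWeight e a.2 else 0) =
      (1 - e) / (n.choose 2 * 16) * #{a : GateCfg n | a.eval = g} +
        e / (8 * n.choose 2) *
          ((n - 1 : ℕ) * ∑ j : Fin n, (#{h : Bool → Bool | (fun x => h (x j)) = g} : ℝ)) := by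
  rw [← sum_ite_eval_unaryCount, card_filter, Nat.cast_sum, mul_sum, mul_sum, ← sum_add_distrib]
  refine sum_congr rfl fun a _ => ?_
  rw [fnWeight_eq]
  split_ifs <;> push_cast <;> ring

theorem sum_ite_eval_gateWeight' (e : ℝ) {n : ℕ} (g : (Fin n → Bool) → Bool) :
    ∑ a : GateCfg' n, (if a.eval = g then gateWeight' e n a else 0) =
      (1 - e) / (n.choose 2 * 16) * #{a : GateCfg n | a.eval = g} +
        e / (n * 4) * ∑ j : Fin n, (#{h : Bool → Bool | (fun x => h (x j)) = g} : ℝ) := by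
  rw [Fintype.sum_sum_type, card_filter, Nat.cast_sum]
  congr 1
  · rw [mul_sum]
    refine sum_congr rfl fun a _ => ?_
    change (if a.eval = g then _ else _) = _
    split_ifs <;> simp [gateWeight']
  · rw [Fintype.sum_prod_type, mul_sum]
    refine sum_congr rfl fun j _ => ?_
    rw [card_filter, Nat.cast_sum, mul_sum]
    refine sum_congr rfl fun h _ => ?_
    change (if (fun x => h (x j)) = g then _ else _) = _
    split_ifs <;> simp [gateWeight']

theorem sum_gateCfg_eval_eq (e : ℝ) {n : ℕ} (hn : 2 ≤ n) (g : (Fin n → Bool) → Bool) :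
    ∑ a : GateCfg n, (if a.eval = g then 1 / (n.choose 2 : ℝ) * fnWeight e a.2 else 0) =
      ∑ a : GateCfg' n, (if a.eval = g then gateWeight' e n a else 0) := by
  have hn1 : (n : ℝ) - 1 ≠ 0 := by
    have : (2 : ℝ) ≤ n := by exact_mod_cast hn
    linarith
  rw [sum_ite_eval_fnWeight, sum_ite_eval_gateWeight', Nat.cast_choose_two,
    Nat.cast_sub (by omega)]
  field_simp
  ring

theorem stmt0_general (ε : ℕ → ℝ)
    (n : ℕ) (hn : 2 ≤ n) (F : (Fin n → Bool) → (Fin n → Bool)) :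
    Pr (ε n) (fun c : Config n => (Config.toBCA c).step = F) =
      Pr' (ε n) (fun c : Config' n => (Config'.toBCA c).step = F) := by
  rw [Pr_step_eq_prod, Pr'_step_eq_prod]
  exact prod_congr rfl fun i _ => sum_gateCfg_eval_eq (ε n) hn _

/-- for every `n ≥ 2` and every map `F : {0,1}ⁿ → {0,1}ⁿ`, the two random
models compute the map `F` with the same probability. -/
theorem stmt0 (ε : ℕ → ℝ) (hε : ∀ n, 0 ≤ ε n ∧ ε n ≤ 1)
    (n : ℕ) (hn : 2 ≤ n) (F : (Fin n → Bool) → (Fin n → Bool)) :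
    Pr (ε n) (fun c : Config n => (Config.toBCA c).step = F) =
      Pr' (ε n) (fun c : Config' n => (Config'.toBCA c).step = F) :=
  stmt0_general ε n hn F
end

section
/- Let ε be a real number with 0 ≤ ε ≤ 1/2, and define a sequence of reals by p_0 = 7/8 − 3ε/8 and p_{d+1} = (1 − ε/2)·p_d − (1 − ε)·p_d²/8. Then for every natural number d, 0 < p_d and 1/p_d ≥ d/16; in particular p_d ≤ 16/d for all d ≥ 1. -/
/-- for `0 ≤ ε ≤ 1/2`, the sequence `p_0 = 7/8 - 3ε/8`,
`p_{d+1} = (1 - ε/2)p_d - (1 - ε)p_d²/8` satisfies `0 < p_d` and `1/p_d ≥ d/16` for all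
`d`, hence `p_d ≤ 16/d` for `d ≥ 1`. -/
theorem stmt2 (ε : ℝ) (hε0 : 0 ≤ ε) (hε1 : ε ≤ 1 / 2)
    (p : ℕ → ℝ) (hp0 : p 0 = 7 / 8 - 3 * ε / 8)
    (hps : ∀ d, p (d + 1) = (1 - ε / 2) * p d - (1 - ε) * (p d) ^ 2 / 8) :
    ∀ d : ℕ, 0 < p d ∧ (d : ℝ) / 16 ≤ 1 / p d ∧ (1 ≤ d → p d ≤ 16 / (d : ℝ)) := by
  have key : ∀ d : ℕ, 0 < p d ∧ p d ≤ 7 / 8 ∧ (d : ℝ) * p d ≤ 16 := by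
    intro d
    induction d with
    | zero =>
      refine ⟨by rw [hp0]; linarith, by rw [hp0]; linarith, by simp⟩
    | succ d ih =>
      obtain ⟨hpos, hub, hprod⟩ := ih
      have hq := hps d
      have hqpos : 0 < p (d + 1) := by
        rw [hq]; nlinarith [sq_nonneg (p d)]
      have hqub : p (d + 1) ≤ 7 / 8 := by
        rw [hq]; nlinarith [sq_nonneg (p d)]
      have hkey : p d * p (d + 1) ≤ 16 * p d - 16 * p (d + 1) := by
        rw [hq]; nlinarith [sq_nonneg (p d), mul_nonneg hε0 hpos.le,
          mul_nonneg (mul_nonneg hε0 hpos.le) hpos.le]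
      have hdq : (d : ℝ) * p d * p (d + 1) ≤ 16 * p (d + 1) := by
        have hd0 : (0 : ℝ) ≤ d := Nat.cast_nonneg d
        nlinarith
      have : ((d : ℝ) + 1) * p (d + 1) * p d ≤ 16 * p d := by nlinarith
      refine ⟨hqpos, hqub, ?_⟩
      have := le_of_mul_le_mul_right (by linarith : ((d : ℝ) + 1) * p (d + 1) * p d ≤ 16 * p d) hpos
      push_cast
      linarith
  intro d
  obtain ⟨hpos, hub, hprod⟩ := key d
  refine ⟨hpos, ?_, ?_⟩
  · rw [div_le_div_iff₀ (by norm_num) hpos]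
    linarith
  · intro hd
    have hd0 : (0 : ℝ) < d := by exact_mod_cast hd
    rw [le_div_iff₀ hd0]
    linarith
end
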